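/- arXiv:1503.08942 — 2 statements merged into one kernel-verified Lean document; each statement's English description precedes it below -/
import Mathlib

section
/- Let β∖γ be a rook strip and α a partition of n. For x ∈ Sₙ, the filling of β∖γ corresponding to x (via the bijection π) is an LR-filling if and only if the α-recording tableau of x is a standard Young tableau of shape α. -/
open Equiv

/-! ### Permutations: adjacent transpositions, Coxeter length, Bruhat order -/

/-- `s` is an adjacent transposition `(i, i+1)` in `S_n` (values `0`-indexed). -/
def IsAdjTrans {n : ℕ} (s : Perm (Fin n)) : Prop :=
  ∃ (i : ℕ) (h : i + 1 < n), s = Equiv.swap ⟨i, Nat.lt_of_succ_lt h⟩ ⟨i + 1, h⟩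

/-- Coxeter length: the minimal number of adjacent transpositions in a factorization. -/
noncomputable def permLength {n : ℕ} (x : Perm (Fin n)) : ℕ :=
  sInf {k | ∃ l : List (Perm (Fin n)), l.length = k ∧ (∀ s ∈ l, IsAdjTrans s) ∧ l.prod = x}

/-- Strict Bruhat order: generated by `u < t * u` for transpositions `t`
increasing the length. -/
def BruhatLT {n : ℕ} (x z : Perm (Fin n)) : Prop :=
  Relation.TransGen
    (fun u v => ∃ t : Perm (Fin n), t.IsSwap ∧ v = t * u ∧ permLength u < permLength v) x z

/-- Bruhat order (reflexive version). -/
def BruhatLE {n : ℕ} (x z : Perm (Fin n)) : Prop := x = z ∨ BruhatLT x z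

/-! ### Partitions -/

/-- A partition: an antitone, finitely supported function `ℕ → ℕ`
(the part `αᵢ` of the paper is `f (i-1)`; rows are `0`-indexed). -/
structure Partn where
  f : ℕ → ℕ
  antitone' : Antitone f
  finite_supp : ∃ N, ∀ i, N ≤ i → f i = 0

/-- `p` is a partition of `n`. -/
def PartnOf (p : Partn) (n : ℕ) : Prop :=
  ∃ N, (∀ i, N ≤ i → p.f i = 0) ∧ ∑ i ∈ Finset.range N, p.f i = n

/-- The partial sum `α₁ + ⋯ + α_j` of the first `j` parts. -/
def psum (p : Partn) (j : ℕ) : ℕ := ∑ i ∈ Finset.range j, p.f i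

/-- The set of block boundaries `α₁, α₁+α₂, …` (`1`-indexed positions). -/
def Bdry (p : Partn) : Set ℕ := {m | ∃ j, 1 ≤ j ∧ m = psum p j}

/-- `S^α`: permutations whose values within each block of `α` occur in increasing
order of position.  Values are `0`-indexed: value `v` is the paper's value `v+1`,
and `v`, `v+1` lie in the same block iff `v+1 ∉ Bdry α`. -/
def SAset (α : Partn) {n : ℕ} (x : Perm (Fin n)) : Prop :=
  ∀ (v : ℕ) (h : v + 1 < n), (v + 1) ∉ Bdry α →
    x⁻¹ ⟨v, Nat.lt_of_succ_lt h⟩ < x⁻¹ ⟨v + 1, h⟩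

/-- Containment of partitions. -/
def PartnSub (γ β : Partn) : Prop := ∀ i, γ.f i ≤ β.f i

/-- The transpose (conjugate) partition: `β'_j = #{i : βᵢ ≥ j}` (columns `0`-indexed). -/
noncomputable def ptranspose (p : Partn) (j : ℕ) : ℕ := Set.ncard {i | j < p.f i}

/-- `β∖γ` is a vertical strip: `βᵢ ≤ γᵢ + 1` for all `i`. -/
def VertStrip (β γ : Partn) : Prop := ∀ i, β.f i ≤ γ.f i + 1

/-- `β∖γ` is a horizontal strip: `β'∖γ'` is a vertical strip. -/
def HorizStrip (β γ : Partn) : Prop := ∀ j, ptranspose β j ≤ ptranspose γ j + 1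

/-- A rook strip is a horizontal and vertical strip. -/
def RookStrip (β γ : Partn) : Prop := VertStrip β γ ∧ HorizStrip β γ

/-- The boxes of the skew diagram `β∖γ` (row, column), `0`-indexed. -/
def SkewCells (β γ : Partn) : Set (ℕ × ℕ) := {c | γ.f c.1 ≤ c.2 ∧ c.2 < β.f c.1}

/-! ### Fillings of skew diagrams -/

/-- A filling of the skew diagram `β∖γ` with content `α`: each box gets an entry
`≥ 1`, and there are `α_u` entries equal to `u` (the paper's `αᵤ` is `α.f (u-1)`). -/
structure SkFilling (α β γ : Partn) where
  entry : ℕ × ℕ → ℕ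
  zero_outside : ∀ c, c ∉ SkewCells β γ → entry c = 0
  pos_inside : ∀ c ∈ SkewCells β γ, 1 ≤ entry c
  content : ∀ u : ℕ, 1 ≤ u → Set.ncard {c ∈ SkewCells β γ | entry c = u} = α.f (u - 1)

/-- The Littlewood–Richardson conditions: rows weakly increase, columns strictly
increase, and the lattice permutation property holds. -/
def IsLRF {α β γ : Partn} (F : SkFilling α β γ) : Prop :=
  (∀ i j j' : ℕ, (i, j) ∈ SkewCells β γ → (i, j') ∈ SkewCells β γ → j ≤ j' →
      F.entry (i, j) ≤ F.entry (i, j')) ∧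
  (∀ i i' j : ℕ, (i, j) ∈ SkewCells β γ → (i', j) ∈ SkewCells β γ → i < i' →
      F.entry (i, j) < F.entry (i', j)) ∧
  (∀ u c : ℕ, 2 ≤ u →
      Set.ncard {p ∈ SkewCells β γ | c ≤ p.2 ∧ F.entry p = u} ≤
      Set.ncard {p ∈ SkewCells β γ | c ≤ p.2 ∧ F.entry p = u - 1})

/-- Row `i` of the partition `γ⁽ᵘ⁾`: the boxes of `γ` together with the boxes of
`β∖γ` whose entry is at most `u`. -/
noncomputable def regionRow {α β γ : Partn} (F : SkFilling α β γ) (u i : ℕ) : ℕ :=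
  γ.f i + Set.ncard {j | (i, j) ∈ SkewCells β γ ∧ F.entry (i, j) ≤ u}

/-- Dominance order on fillings: `Z ≤_dom X` iff `δ⁽ᵘ⁾ ≤_dom γ⁽ᵘ⁾` for every `u`. -/
def DomLE {α β γ : Partn} (Z X : SkFilling α β γ) : Prop :=
  ∀ u j : ℕ, ∑ i ∈ Finset.range j, regionRow Z u i ≤ ∑ i ∈ Finset.range j, regionRow X u i

/-- A single sorting swap: exchange two out-of-order entries within a row
(left entry bigger) or within a column (upper entry bigger). -/
def SortSwap (β γ : Partn) (W Z : ℕ × ℕ → ℕ) : Prop :=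
  ∃ p q : ℕ × ℕ, p ∈ SkewCells β γ ∧ q ∈ SkewCells β γ ∧
    ((p.1 = q.1 ∧ p.2 < q.2) ∨ (p.2 = q.2 ∧ p.1 < q.1)) ∧
    W q < W p ∧
    Z = Function.update (Function.update W p (W q)) q (W p)

/-- `Z` is obtained from `X` by a decreasing box move: two entries of `X` are
exchanged so that the smaller entry is in the lower position after the exchange,
and then rows and columns are re-sorted if necessary. -/
def BoxMove {α β γ : Partn} (X Z : SkFilling α β γ) : Prop :=
  ∃ p q : ℕ × ℕ, p ∈ SkewCells β γ ∧ q ∈ SkewCells β γ ∧ p.1 < q.1 ∧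
    X.entry p < X.entry q ∧
    Relation.ReflTransGen (SortSwap β γ)
      (Function.update (Function.update X.entry p (X.entry q)) q (X.entry p)) Z.entry

/-- The box order on LR-fillings: generated by decreasing box moves. -/
def LeBox {α β γ : Partn} (Z X : SkFilling α β γ) : Prop :=
  Relation.ReflTransGen (fun Y W => IsLRF Y ∧ IsLRF W ∧ BoxMove W Y) Z X

/-! ### Reading words and standardization -/

/-- The block (paper entry, `1`-indexed) containing the `0`-indexed value `v`. -/
noncomputable def blockIdx (α : Partn) (v : ℕ) : ℕ := sInf {u | v < psum α u}

/-- `e` enumerates the boxes of the rook strip `β∖γ` from top right to bottom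
left, i.e. in increasing order of rows. -/
def IsRowRead (β γ : Partn) {n : ℕ} (e : Fin n → ℕ × ℕ) : Prop :=
  (∀ k, e k ∈ SkewCells β γ) ∧ Function.Injective e ∧
  (∀ c ∈ SkewCells β γ, ∃ k, e k = c) ∧
  ∀ k l : Fin n, k < l → (e k).1 < (e l).1

/-- `e` enumerates the boxes of `β∖γ` column by column from left to right, each
column read from bottom to top (the reading order of the word `ω`). -/
def IsColRead (β γ : Partn) {n : ℕ} (e : Fin n → ℕ × ℕ) : Prop :=
  (∀ k, e k ∈ SkewCells β γ) ∧ Function.Injective e ∧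
  (∀ c ∈ SkewCells β γ, ∃ k, e k = c) ∧
  ∀ k l : Fin n, k < l →
    (e k).2 < (e l).2 ∨ ((e k).2 = (e l).2 ∧ (e l).1 < (e k).1)

/-- `p` is the standardization `π(F)` of the reading word of the filling `F`
with respect to the reading enumeration `e`: position `k` receives a value in the
block corresponding to the entry of the `k`-th box, and equal entries receive
their values in reading order. -/
def IsStdOf (α : Partn) {β γ : Partn} {n : ℕ} (F : SkFilling α β γ)
    (e : Fin n → ℕ × ℕ) (p : Perm (Fin n)) : Prop :=
  (∀ k : Fin n, blockIdx α (p k) = F.entry (e k)) ∧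
  ∀ k l : Fin n, k < l → F.entry (e k) = F.entry (e l) → p k < p l

/-- The `α`-recording tableau of `x` is standard: the entries `x⁻¹(psum α u + j)`
increase along rows and down columns of the shape `α` (rows `0`-indexed). -/
def RecStd (α : Partn) {n : ℕ} (x : Perm (Fin n)) : Prop :=
  (∀ u j j' : ℕ, j < j' → j' < α.f u →
    ∀ (h : psum α u + j < n) (h' : psum α u + j' < n),
      x⁻¹ ⟨psum α u + j, h⟩ < x⁻¹ ⟨psum α u + j', h'⟩) ∧
  (∀ u u' j : ℕ, u < u' → j < α.f u' →
    ∀ (h : psum α u + j < n) (h' : psum α u' + j < n),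
      x⁻¹ ⟨psum α u + j, h⟩ < x⁻¹ ⟨psum α u' + j, h'⟩)

/-- Covering relation of the box order on LR-fillings. -/
def CovBox {α β γ : Partn} (X Y : SkFilling α β γ) : Prop :=
  IsLRF X ∧ IsLRF Y ∧ LeBox X Y ∧ X ≠ Y ∧
    ∀ W, IsLRF W → LeBox X W → LeBox W Y → W = X ∨ W = Y

/-- The decreasing block `(i, i-1, …, 1)`. -/
def descBlock (i : ℕ) : List ℕ := ((List.range i).reverse).map (· + 1)

/-!
In a rook strip every row and every column holds at most one box, so the row and column
conditions of an LR-filling are vacuous, and reading the boxes row by row reads the columns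
from right to left. The lattice condition thus says that the reading word `w` is a lattice
word. In the standardization `x` of `w`, the position `x⁻¹ (α₁ + ⋯ + α_b + j)` is that of
the `(j+1)`-st letter `b+1` of `w`, so the `(j+1)`-st letter `b+1` precedes the `(j+1)`-st
letter `b+2` exactly when column `j` of the recording tableau increases from row `b` to
row `b+1`; and in a lattice word every prefix holds at least as many letters `b+1` as `b+2`.
-/

open Finset

lemma Antitone.forall_lt_or_exists_le_iff_le {ι κ : Type*} [LinearOrder ι] [Fintype ι]
    [LinearOrder κ] {f : ι → κ} (hf : Antitone f) (c : κ) :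
    (∀ k, f k < c) ∨ ∃ K, ∀ k, c ≤ f k ↔ k ≤ K := by
  classical
  by_cases h : ∃ k, c ≤ f k
  · obtain ⟨k₀, hk₀⟩ := h
    have hne : ({k | c ≤ f k} : Finset ι).Nonempty := ⟨k₀, mem_filter.2 ⟨mem_univ _, hk₀⟩⟩
    refine .inr ⟨max' _ hne, fun k => ⟨fun hk => le_max' _ k (mem_filter.2 ⟨mem_univ _, hk⟩),
      fun hk => (mem_filter.1 (max'_mem _ hne)).2.trans (hf hk)⟩⟩
  · exact .inl (by simpa using h)

lemma psum_succ (α : Partn) (b : ℕ) : psum α (b + 1) = psum α b + α.f b :=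
  sum_range_succ _ _

lemma psum_mono (α : Partn) : Monotone (psum α) := fun _ _ hab =>
  sum_le_sum_of_subset (range_subset_range.2 hab)

lemma blockIdx_eq_succ_iff {α : Partn} {v b : ℕ} :
    blockIdx α v = b + 1 ↔ psum α b ≤ v ∧ v < psum α b + α.f b := by
  rw [blockIdx, Nat.sInf_upward_closed_eq_succ_iff (s := {u | v < psum α u})
    (fun _ _ hle h => lt_of_lt_of_le h (psum_mono α hle)), ← psum_succ]
  simp only [Set.mem_ofPred_eq, not_lt, and_comm]

lemma blockIdx_psum_add {α : Partn} {b j : ℕ} (hj : j < α.f b) :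
    blockIdx α (psum α b + j) = b + 1 :=
  blockIdx_eq_succ_iff.2 ⟨Nat.le_add_right _ _, by omega⟩

section Words

variable {n : ℕ}

def IsStandardization (α : Partn) (w : Fin n → ℕ) (x : Perm (Fin n)) : Prop :=
  (∀ k, blockIdx α (x k) = w k) ∧ ∀ k l, k < l → w k = w l → x k < x l

def IsLatticeWord (w : Fin n → ℕ) : Prop :=
  ∀ K u, 2 ≤ u → #{k | k ≤ K ∧ w k = u} ≤ #{k | k ≤ K ∧ w k = u - 1}

namespace IsStandardization

variable {α : Partn} {w : Fin n → ℕ} {x : Perm (Fin n)}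

lemma apply_inv (hx : IsStandardization α w x) (v : Fin n) : w (x⁻¹ v) = blockIdx α v := by
  rw [← hx.1]
  simp

lemma inv_le_inv_of_le (hx : IsStandardization α w x) {v v' : Fin n} (hvv : v ≤ v')
    (hblock : blockIdx α v = blockIdx α v') : x⁻¹ v ≤ x⁻¹ v' := by
  refine not_lt.1 fun hlt => not_lt.2 hvv ?_
  simpa using hx.2 _ _ hlt (by rw [hx.apply_inv, hx.apply_inv, hblock])

lemma inv_lt_inv_of_lt (hx : IsStandardization α w x) {v v' : Fin n} (hvv : v < v')
    (hblock : blockIdx α v = blockIdx α v') : x⁻¹ v < x⁻¹ v' :=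
  (hx.inv_le_inv_of_le hvv.le hblock).lt_of_ne (x⁻¹.injective.ne hvv.ne)

lemma exists_inv_le_of_lt_card_filter (hx : IsStandardization α w x) {K : Fin n} {b j : ℕ}
    (hlt : j < #{k | k ≤ K ∧ w k = b + 1}) :
    ∃ h : psum α b + j < n, j < α.f b ∧ x⁻¹ ⟨psum α b + j, h⟩ ≤ K := by
  by_contra! hfar
  refine hlt.not_ge ((card_le_card_of_injOn (fun k => (x k : ℕ) - psum α b) ?_ ?_).trans
    (card_range j).le)
  · intro k hk
    simp only [coe_filter, mem_univ, true_and, Set.mem_ofPred_eq] at hk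
    obtain ⟨hbk, hkb⟩ := blockIdx_eq_succ_iff.1 ((hx.1 k).trans hk.2)
    simp only [coe_range, Set.mem_Iio]
    by_contra! hjk
    have hjb : j < α.f b := by omega
    have h : psum α b + j < n := by omega
    refine (hfar h hjb).not_ge (le_trans ?_ hk.1)
    calc x⁻¹ ⟨psum α b + j, h⟩
        ≤ x⁻¹ (x k) := hx.inv_le_inv_of_le (Fin.le_def.2 (show psum α b + j ≤ x k by omega))
          (by rw [hx.1, hk.2]; exact blockIdx_psum_add hjb)
      _ = k := by simp
  · intro k hk l hl hkl
    simp only [coe_filter, mem_univ, true_and, Set.mem_ofPred_eq] at hk hl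
    have hbk := (blockIdx_eq_succ_iff.1 ((hx.1 k).trans hk.2)).1
    have hbl := (blockIdx_eq_succ_iff.1 ((hx.1 l).trans hl.2)).1
    exact x.injective (Fin.ext (by simp only at hkl; omega))

lemma lt_card_filter_of_inv_le (hx : IsStandardization α w x) {K : Fin n} {b j : ℕ}
    (hj : j < α.f b) (h : psum α b + j < n) (hK : x⁻¹ ⟨psum α b + j, h⟩ ≤ K) :
    j < #{k | k ≤ K ∧ w k = b + 1} := by
  have hblock : ∀ v : Fin n, psum α b ≤ v → v ≤ psum α b + j → blockIdx α v = b + 1 :=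
    fun v hlo hhi => blockIdx_eq_succ_iff.2 ⟨hlo, by omega⟩
  have hcard := card_le_card_of_injOn (fun v => x⁻¹ v)
    (s := Icc ⟨psum α b, by omega⟩ ⟨psum α b + j, h⟩) (t := {k | k ≤ K ∧ w k = b + 1})
    (fun v hv => by
      simp only [coe_Icc, Set.mem_Icc, Fin.le_def, coe_filter, mem_univ, true_and,
        Set.mem_ofPred_eq] at hv ⊢
      refine ⟨le_trans (hx.inv_le_inv_of_le (Fin.le_def.2 hv.2) ?_) hK, ?_⟩
      · rw [hblock v hv.1 hv.2, hblock _ (by simp) le_rfl]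
      · rw [hx.apply_inv, hblock v hv.1 hv.2])
    x⁻¹.injective.injOn
  rw [Fin.card_Icc, Fin.val_mk, Fin.val_mk] at hcard
  omega

lemma recStd_of_inv_lt_inv_succ (hx : IsStandardization α w x)
    (hcol : ∀ b j, j < α.f (b + 1) → ∀ (h : psum α b + j < n) (h' : psum α (b + 1) + j < n),
      x⁻¹ ⟨psum α b + j, h⟩ < x⁻¹ ⟨psum α (b + 1) + j, h'⟩) :
    RecStd α x := by
  refine ⟨fun u j j' hjj hj' h h' => hx.inv_lt_inv_of_lt (Fin.mk_lt_mk.2 (by omega))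
    (by rw [blockIdx_psum_add (hjj.trans hj'), blockIdx_psum_add hj']), fun u u' j hu => ?_⟩
  induction u', hu using Nat.le_induction with
  | base => exact hcol u j
  | succ m hm ih =>
    intro hj h h'
    have hjm : j < α.f m := hj.trans_le (α.antitone' m.le_succ)
    have hm : psum α m + j < n := by
      have : psum α m ≤ psum α (m + 1) := psum_mono α m.le_succ
      omega
    exact (ih hjm h hm).trans (hcol m j hj hm h')

lemma inv_lt_inv_succ_of_isLatticeWord (hx : IsStandardization α w x) (hw : IsLatticeWord w)
    {b j : ℕ} (hj : j < α.f (b + 1)) (h : psum α b + j < n) (h' : psum α (b + 1) + j < n) :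
    x⁻¹ ⟨psum α b + j, h⟩ < x⁻¹ ⟨psum α (b + 1) + j, h'⟩ := by
  obtain ⟨_, hjb, hle⟩ := hx.exists_inv_le_of_lt_card_filter <|
    (hx.lt_card_filter_of_inv_le hj h' le_rfl).trans_le (hw _ (b + 2) le_add_self)
  refine hle.lt_of_ne fun heq => ?_
  have hval : psum α b + j = psum α (b + 1) + j := Fin.mk.inj_iff.1 (x⁻¹.injective heq)
  have := psum_succ α b
  omega

lemma isLatticeWord_of_recStd (hx : IsStandardization α w x) (hrec : RecStd α x) :
    IsLatticeWord w := by
  intro K u hu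
  obtain ⟨b, rfl⟩ : ∃ b, u = b + 2 := ⟨u - 2, by omega⟩
  refine le_of_forall_lt fun j hj => ?_
  obtain ⟨h', hj', hle⟩ := hx.exists_inv_le_of_lt_card_filter hj
  have hjb : j < α.f b := hj'.trans_le (α.antitone' b.le_succ)
  have h : psum α b + j < n := by
    have : psum α b ≤ psum α (b + 1) := psum_mono α b.le_succ
    omega
  exact hx.lt_card_filter_of_inv_le hjb h
    ((hrec.2 b (b + 1) j b.lt_succ_self hj' h h').trans_le hle).le

lemma isLatticeWord_iff_recStd (hx : IsStandardization α w x) :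
    IsLatticeWord w ↔ RecStd α x :=
  ⟨fun hw => hx.recStd_of_inv_lt_inv_succ fun _ _ => hx.inv_lt_inv_succ_of_isLatticeWord hw,
    hx.isLatticeWord_of_recStd⟩

end IsStandardization

end Words

lemma Partn.finite_setOf_lt (p : Partn) (c : ℕ) : {i | c < p.f i}.Finite := by
  obtain ⟨N, hN⟩ := p.finite_supp
  refine (Set.finite_Iio N).subset fun i hi => Set.mem_Iio.2 (not_le.1 fun hNi => ?_)
  simp [hN i hNi] at hi

section RookStrip

variable {β γ : Partn}

lemma VertStrip.snd_eq (hv : VertStrip β γ) {p : ℕ × ℕ} (hp : p ∈ SkewCells β γ) :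
    p.2 = γ.f p.1 := by
  have := hv p.1
  have : γ.f p.1 ≤ p.2 ∧ p.2 < β.f p.1 := hp
  omega

/-- Two boxes in rows `p.1 < q.1` of one column `c` would make column `c` of `β` at least
`q.1 + 1 ≥ p.1 + 2` long, while column `c` of `γ` is at most `p.1` long. -/
lemma RookStrip.snd_lt_snd (hrook : RookStrip β γ) {p q : ℕ × ℕ} (hp : p ∈ SkewCells β γ)
    (hq : q ∈ SkewCells β γ) (hpq : p.1 < q.1) : q.2 < p.2 := by
  have hpc := hrook.1.snd_eq hp
  have hqc := hrook.1.snd_eq hq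
  refine lt_of_le_of_ne (hqc ▸ hpc ▸ γ.antitone' hpq.le) fun hc => ?_
  have hγ : ptranspose γ p.2 ≤ p.1 :=
    calc ptranspose γ p.2 ≤ (Set.Iio p.1).ncard :=
          Set.ncard_le_ncard (fun i hi => Set.mem_Iio.2 (not_le.1 fun hpi => by
            have : p.2 < γ.f i := hi
            have := γ.antitone' hpi
            omega)) (Set.finite_Iio _)
      _ = p.1 := Set.ncard_Iio_nat _
  have hβ : q.1 + 1 ≤ ptranspose β p.2 :=
    calc q.1 + 1 = (Set.Iic q.1).ncard := (Set.ncard_Iic_nat _).symm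
      _ ≤ ptranspose β p.2 := Set.ncard_le_ncard (fun i hi => by
            have := β.antitone' (Set.mem_Iic.1 hi)
            have : q.2 < β.f q.1 := hq.2
            show p.2 < β.f i
            omega) (β.finite_setOf_lt _)
  have := hrook.2 p.2
  omega

lemma IsRowRead.strictAnti_snd (hrook : RookStrip β γ) {n : ℕ} {e : Fin n → ℕ × ℕ}
    (he : IsRowRead β γ e) : StrictAnti fun k => (e k).2 :=
  fun k l hkl => hrook.snd_lt_snd (he.1 k) (he.1 l) (he.2.2.2 k l hkl)

lemma IsRowRead.ncard_skewCells_filter {n : ℕ} {e : Fin n → ℕ × ℕ} (he : IsRowRead β γ e)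
    (Q : ℕ × ℕ → Prop) [DecidablePred Q] :
    Set.ncard {p ∈ SkewCells β γ | Q p} = #{k | Q (e k)} := by
  obtain ⟨hcell, hinj, hsurj, -⟩ := he
  have himage : {p ∈ SkewCells β γ | Q p} = e '' {k | Q (e k)} := by
    ext p
    refine ⟨fun ⟨hp, hQ⟩ => ?_, ?_⟩
    · obtain ⟨k, rfl⟩ := hsurj p hp
      exact ⟨k, hQ, rfl⟩
    · rintro ⟨k, hk, rfl⟩
      exact ⟨hcell k, hk⟩
  rw [himage, Set.ncard_image_of_injective _ hinj, ← coe_filter_univ, Set.ncard_coe_finset]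

lemma RookStrip.isLRF_iff (hrook : RookStrip β γ) {α : Partn} (F : SkFilling α β γ) :
    IsLRF F ↔ ∀ u c : ℕ, 2 ≤ u →
      Set.ncard {p ∈ SkewCells β γ | c ≤ p.2 ∧ F.entry p = u} ≤
      Set.ncard {p ∈ SkewCells β γ | c ≤ p.2 ∧ F.entry p = u - 1} := by
  refine ⟨fun h => h.2.2, fun h => ⟨fun i j j' hj hj' _ => ?_, fun i i' j hi hi' hii' => ?_, h⟩⟩
  · obtain rfl : j = j' := (hrook.1.snd_eq hj).trans (hrook.1.snd_eq hj').symm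
    exact le_rfl
  · exact absurd (hrook.snd_lt_snd hi hi' hii') (lt_irrefl j)

lemma RookStrip.isLRF_iff_isLatticeWord (hrook : RookStrip β γ) {n : ℕ} {e : Fin n → ℕ × ℕ}
    (he : IsRowRead β γ e) {α : Partn} (F : SkFilling α β γ) :
    IsLRF F ↔ IsLatticeWord fun k => F.entry (e k) := by
  simp only [hrook.isLRF_iff, he.ncard_skewCells_filter]
  have hanti := he.strictAnti_snd hrook
  constructor
  · intro h K u hu
    simpa only [hanti.le_iff_ge] using h u (e K).2 hu
  · intro h u c hu
    rcases hanti.antitone.forall_lt_or_exists_le_iff_le c with hlt | ⟨K, hK⟩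
    · simp [fun k => (hlt k).not_ge]
    · simpa only [hK] using h K u hu

end RookStrip

theorem stmt8_general (n : ℕ) (α β γ : Partn) (hrook : RookStrip β γ)
    (e : Fin n → ℕ × ℕ) (he : IsRowRead β γ e)
    (F : SkFilling α β γ) (x : Perm (Fin n)) (hx : IsStdOf α F e x) :
    IsLRF F ↔ RecStd α x :=
  (hrook.isLRF_iff_isLatticeWord he F).trans (IsStandardization.isLatticeWord_iff_recStd hx)

/-- the filling of the rook strip corresponding to `x` via `π` is an
LR-filling iff the `α`-recording tableau of `x` is standard. -/
theorem stmt8 (n : ℕ) (α β γ : Partn) (hsub : PartnSub γ β) (hrook : RookStrip β γ)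
    (hn : PartnOf α n) (e : Fin n → ℕ × ℕ) (he : IsRowRead β γ e)
    (F : SkFilling α β γ) (x : Perm (Fin n)) (hx : IsStdOf α F e x) :
    IsLRF F ↔ RecStd α x :=
  stmt8_general n α β γ hrook e he F x hx
end

section
/- Let β∖γ be a rook strip and α a partition of n, and let L ⊆ Sₙ be the set of permutations corresponding (via π) to LR-fillings of shape β∖γ with content α. If x ⋖ z is a covering relation in the Bruhat order with x, z ∈ L, then the LR-filling corresponding to z is obtained from the LR-filling corresponding to x by a single decreasing box move. -/
open Equiv

/-!
Coxeter length in `S_n` is the number of inversions, and exchanging the values at positions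
`p < q` with `x p < x q` strictly increases it: every inversion of `x` either survives in
`x * (p q)` or is moved, by conjugation with `(p q)`, to a new inversion other than `(p, q)`.
Hence a Bruhat cover `x ⋖ z` is `z = x * (p q)` with `p < q` and `x p < x q`. Under
standardization the two fillings then differ exactly by exchanging the entries of the boxes read
at `p` and `q`; these lie in rows `(e p).1 < (e q).1`, and the entry at `e p` is the strictly
smaller one, because equal entries are standardized in reading order.
-/

open Equiv Finset

namespace Equiv.Perm

variable {n : ℕ}

def inversions (x : Perm (Fin n)) : Finset (Fin n × Fin n) :=
  univ.filter fun c => c.1 < c.2 ∧ x c.2 < x c.1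

@[simp]
lemma mem_inversions {x : Perm (Fin n)} {c : Fin n × Fin n} :
    c ∈ inversions x ↔ c.1 < c.2 ∧ x c.2 < x c.1 := by
  simp [inversions]

@[simp]
lemma inversions_one : inversions (1 : Perm (Fin n)) = ∅ := by
  ext c; simpa using fun h : c.1 < c.2 => h.le

lemma swap_lt_swap_of_adjacent {a b u v : Fin n} (hab : (b : ℕ) = a + 1)
    (h : swap a b v < swap a b u) : v < u ∨ (u = a ∧ v = b) := by
  rw [swap_apply_def, swap_apply_def] at h
  simp only [Fin.lt_def, Fin.ext_iff] at *
  split_ifs at h <;> omega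

lemma inversions_swap_mul_subset {a b : Fin n} (hab : (b : ℕ) = a + 1) (x : Perm (Fin n)) :
    inversions (swap a b * x) ⊆ insert (x⁻¹ a, x⁻¹ b) (inversions x) := by
  intro c hc
  rw [mem_inversions, Perm.mul_apply, Perm.mul_apply] at hc
  rcases swap_lt_swap_of_adjacent hab hc.2 with h | ⟨h1, h2⟩
  · exact mem_insert_of_mem (mem_inversions.2 ⟨hc.1, h⟩)
  · rw [← h1, ← h2]; simp

lemma card_inversions_swap_mul_le {a b : Fin n} (hab : (b : ℕ) = a + 1) (x : Perm (Fin n)) :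
    #(inversions (swap a b * x)) ≤ #(inversions x) + 1 :=
  (card_le_card (inversions_swap_mul_subset hab x)).trans (card_insert_le _ _)

lemma swap_mem_inversions_mul_swap {x : Perm (Fin n)} {p q : Fin n} (hpq : p < q)
    (hx : x p < x q) {c : Fin n × Fin n} (hc : c ∈ inversions x)
    (hc' : c ∉ inversions (x * swap p q)) :
    (swap p q c.1, swap p q c.2) ∈ (inversions (x * swap p q)).erase (p, q) \ inversions x := by
  obtain ⟨i, j⟩ := c
  simp only [mem_sdiff, mem_erase, mem_inversions, Perm.mul_apply, swap_apply_self, not_and,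
    not_lt] at *
  grind

lemma card_inversions_lt_mul_swap {x : Perm (Fin n)} {p q : Fin n} (hpq : p < q)
    (hx : x p < x q) : #(inversions x) < #(inversions (x * swap p q)) := by
  have hpqx : (p, q) ∉ inversions x := by simpa using fun _ => hx.le
  let φ : Fin n × Fin n → Fin n × Fin n := fun c =>
    if c ∈ inversions (x * swap p q) then c else (swap p q c.1, swap p q c.2)
  have hmaps : ∀ c ∈ inversions x, φ c ∈ (inversions (x * swap p q)).erase (p, q) := by
    intro c hc
    by_cases hcy : c ∈ inversions (x * swap p q)
    · simp only [φ, if_pos hcy]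
      exact mem_erase.2 ⟨fun h => hpqx (h ▸ hc), hcy⟩
    · simpa only [φ, if_neg hcy] using
        (mem_sdiff.1 (swap_mem_inversions_mul_swap hpq hx hc hcy)).1
  have hinj : Set.InjOn φ (inversions x) := by
    intro c hc c' hc' h
    by_cases hcy : c ∈ inversions (x * swap p q) <;>
      by_cases hcy' : c' ∈ inversions (x * swap p q) <;>
      simp only [φ, hcy, hcy', if_true, if_false] at h
    · exact h
    · exact absurd (h ▸ hc) (mem_sdiff.1 (swap_mem_inversions_mul_swap hpq hx hc' hcy')).2
    · exact absurd (h ▸ hc') (mem_sdiff.1 (swap_mem_inversions_mul_swap hpq hx hc hcy)).2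
    · simpa [Prod.ext_iff] using h
  have hpqy : (p, q) ∈ inversions (x * swap p q) := by simpa using ⟨hpq, hx⟩
  calc #(inversions x) ≤ #((inversions (x * swap p q)).erase (p, q)) :=
        card_le_card_of_injOn φ hmaps hinj
    _ < #(inversions (x * swap p q)) := card_erase_lt_of_mem hpqy

lemma card_inversions_lt_swap_mul {x : Perm (Fin n)} {a b : Fin n} (hab : a < b)
    (hx : x⁻¹ a < x⁻¹ b) : #(inversions x) < #(inversions (swap a b * x)) := by
  rw [swap_mul_eq_mul_swap]
  exact card_inversions_lt_mul_swap hx (by simpa using hab)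

lemma exists_descent_of_ne_one {w : Perm (Fin n)} (hw : w ≠ 1) :
    ∃ (i : ℕ) (h : i + 1 < n), w ⟨i + 1, h⟩ < w ⟨i, Nat.lt_of_succ_lt h⟩ := by
  by_contra! hmono
  refine hw (Equiv.ext fun k => congrFun (StrictMono.eq_id ?_) k)
  cases n with
  | zero => exact fun k => k.elim0
  | succ n =>
    refine Fin.strictMono_iff_lt_succ.2 fun i => (hmono i (by omega)).lt_of_ne ?_
    exact w.injective.ne (by simp [Fin.ext_iff])

lemma exists_adjTrans_prod_eq (x : Perm (Fin n)) :
    ∃ l : List (Perm (Fin n)),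
      l.length = #(inversions x) ∧ (∀ s ∈ l, IsAdjTrans s) ∧ l.prod = x := by
  induction hm : #(inversions x) using Nat.strong_induction_on generalizing x with
  | _ m ih =>
  rcases eq_or_ne x 1 with rfl | hx
  · exact ⟨[], by simp_all, by simp, rfl⟩
  obtain ⟨i, hi, hdesc⟩ := exists_descent_of_ne_one (inv_ne_one.2 hx)
  set s : Perm (Fin n) := swap ⟨i, Nat.lt_of_succ_lt hi⟩ ⟨i + 1, hi⟩
  have hxs : x = s * (s * x) := by rw [← mul_assoc, swap_mul_self, one_mul]
  have hlt : #(inversions (s * x)) < #(inversions x) := by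
    conv_rhs => rw [hxs]
    exact card_inversions_lt_swap_mul (Fin.mk_lt_mk.2 i.lt_succ_self) (by simpa [s] using hdesc)
  have hle : #(inversions x) ≤ #(inversions (s * x)) + 1 := by
    conv_lhs => rw [hxs]
    exact card_inversions_swap_mul_le rfl _
  obtain ⟨l, hlen, hadj, hprod⟩ := ih _ (hm ▸ hlt) (s * x) rfl
  refine ⟨s :: l, by simp only [List.length_cons]; omega, ?_,
    by rw [List.prod_cons, hprod, ← hxs]⟩
  rintro t (_ | ⟨_, ht⟩)
  · exact ⟨i, hi, rfl⟩
  · exact hadj t ht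

lemma card_inversions_prod_le_length {l : List (Perm (Fin n))} (hl : ∀ s ∈ l, IsAdjTrans s) :
    #(inversions l.prod) ≤ l.length := by
  induction l with
  | nil => simp
  | cons s l ih =>
    obtain ⟨i, hi, rfl⟩ := hl s List.mem_cons_self
    rw [List.prod_cons, List.length_cons]
    have := ih fun t ht => hl t (List.mem_cons_of_mem _ ht)
    have := card_inversions_swap_mul_le
      (a := ⟨i, Nat.lt_of_succ_lt hi⟩) (b := ⟨i + 1, hi⟩) rfl l.prod
    omega

end Equiv.Perm

open Equiv.Perm

lemma permLength_eq_card_inversions {n : ℕ} (x : Perm (Fin n)) :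
    permLength x = #(inversions x) := by
  obtain ⟨l, hl⟩ := exists_adjTrans_prod_eq x
  refine le_antisymm (Nat.sInf_le ⟨l, hl⟩) (le_csInf ⟨_, l, hl⟩ ?_)
  rintro k ⟨l', rfl, hadj, rfl⟩
  exact card_inversions_prod_le_length hadj

lemma permLength_lt_of_bruhatLT {n : ℕ} {x z : Perm (Fin n)} (h : BruhatLT x z) :
    permLength x < permLength z := by
  induction h with
  | single h => exact h.choose_spec.2.2
  | tail _ h ih => exact ih.trans h.choose_spec.2.2

lemma exists_mul_swap_of_bruhat_cover {n : ℕ} {x z : Perm (Fin n)} (hlt : BruhatLT x z)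
    (hcov : permLength z = permLength x + 1) :
    ∃ p q : Fin n, p < q ∧ x p < x q ∧ z = x * swap p q := by
  obtain ⟨m, hxm, t, ⟨a, b, hab, rfl⟩, rfl, hm⟩ := Relation.TransGen.tail'_iff.mp hlt
  obtain rfl : x = m := by
    refine ((Relation.reflTransGen_iff_eq_or_transGen.mp hxm).resolve_right fun h => ?_).symm
    have := permLength_lt_of_bruhatLT h
    omega
  obtain ⟨p, q, hpq, hz⟩ : ∃ p q : Fin n, p < q ∧ swap a b * x = x * swap p q := by
    rw [swap_mul_eq_mul_swap]
    rcases (x⁻¹.injective.ne hab).lt_or_gt with h | h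
    · exact ⟨_, _, h, rfl⟩
    · exact ⟨_, _, h, by rw [swap_comm]⟩
  refine ⟨p, q, hpq, (x.injective.ne hpq.ne).lt_or_gt.resolve_right fun hqp => ?_, hz⟩
  have := card_inversions_lt_mul_swap (x := x * swap p q) hpq (by simpa using hqp)
  rw [mul_swap_mul_self, ← permLength_eq_card_inversions, ← permLength_eq_card_inversions,
    ← hz] at this
  omega

lemma blockIdx_mono {α : Partn} {n : ℕ} (hn : PartnOf α n) {v w : ℕ} (hvw : v ≤ w)
    (hw : w < n) : blockIdx α v ≤ blockIdx α w := by
  obtain ⟨N, -, hN⟩ := hn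
  have hwN : w < psum α N := by rwa [psum, hN]
  exact Nat.sInf_le (hvw.trans_lt (Nat.sInf_mem (s := {u | w < psum α u}) ⟨N, hwN⟩))

section Standardization

variable {α β γ : Partn} {n : ℕ} {F G : SkFilling α β γ} {e : Fin n → ℕ × ℕ}
  {x : Perm (Fin n)} {p q : Fin n}

lemma IsStdOf.entry_eq_comp_swap (he_mem : ∀ k, e k ∈ SkewCells β γ) (he_inj : e.Injective)
    (he_surj : ∀ c ∈ SkewCells β γ, ∃ k, e k = c) (hF : IsStdOf α F e x)
    (hG : IsStdOf α G e (x * swap p q)) : G.entry = F.entry ∘ swap (e p) (e q) := by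
  funext c
  by_cases hc : c ∈ SkewCells β γ
  · obtain ⟨k, rfl⟩ := he_surj c hc
    rw [Function.comp_apply, ← he_inj.map_swap, ← hF.1, ← hG.1, Perm.mul_apply]
  · have hp : c ≠ e p := fun h => hc (h ▸ he_mem p)
    have hq : c ≠ e q := fun h => hc (h ▸ he_mem q)
    rw [Function.comp_apply, swap_apply_of_ne_of_ne hp hq, F.zero_outside c hc,
      G.zero_outside c hc]

lemma IsStdOf.entry_lt_of_mul_swap (hn : PartnOf α n) (hF : IsStdOf α F e x)
    (hG : IsStdOf α G e (x * swap p q)) (hpq : p < q) (hx : x p < x q) :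
    F.entry (e p) < F.entry (e q) := by
  rw [← hF.1 p, ← hF.1 q]
  refine (blockIdx_mono hn hx.le (x q).isLt).lt_of_ne fun heq => ?_
  have := hG.2 p q hpq (by rw [← hG.1 p, ← hG.1 q]; simpa using heq.symm)
  simp only [Perm.mul_apply, swap_apply_left, swap_apply_right] at this
  exact this.not_gt hx

end Standardization

theorem stmt9_general (n : ℕ) (α β γ : Partn)
    (hn : PartnOf α n) (e : Fin n → ℕ × ℕ) (he : IsRowRead β γ e)
    (X Z : SkFilling α β γ)
    (x z : Perm (Fin n)) (hx : IsStdOf α X e x) (hz : IsStdOf α Z e z)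
    (hlt : BruhatLT x z) (hcov : permLength z = permLength x + 1) :
    BoxMove X Z := by
  obtain ⟨p, q, hpq, hxpq, rfl⟩ := exists_mul_swap_of_bruhat_cover hlt hcov
  refine ⟨e p, e q, he.1 p, he.1 q, he.2.2.2 p q hpq,
    hx.entry_lt_of_mul_swap hn hz hpq hxpq, ?_⟩
  rw [hx.entry_eq_comp_swap he.1 he.2.1 he.2.2.1 hz, swap_comm, comp_swap_eq_update]

/-- a Bruhat cover `x ⋖ z` between permutations corresponding to
LR-fillings yields a single decreasing box move between the fillings. -/
theorem stmt9 (n : ℕ) (α β γ : Partn) (hsub : PartnSub γ β) (hrook : RookStrip β γ)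
    (hn : PartnOf α n) (e : Fin n → ℕ × ℕ) (he : IsRowRead β γ e)
    (X Z : SkFilling α β γ) (hX : IsLRF X) (hZ : IsLRF Z)
    (x z : Perm (Fin n)) (hx : IsStdOf α X e x) (hz : IsStdOf α Z e z)
    (hlt : BruhatLT x z) (hcov : permLength z = permLength x + 1) :
    BoxMove X Z :=
  stmt9_general n α β γ hn e he X Z x z hx hz hlt hcov
end
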